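/- (Three-point estimate.) Let A and B be nonempty closed subsets of ℝⁿ, x* ∈ A ∩ B, ω ∈ [0,2), γ > 0, and c ∈ (0, γ/2). Suppose there is a neighborhood U of x* such that: (i) every building block b → a⁺ → b⁺ with b, a⁺, b⁺ ∈ U satisfies ⟨b − a⁺, b⁺ − a⁺⟩ ≤ (1 − γ‖b⁺ − a⁺‖^ω)‖b − a⁺‖‖b⁺ − a⁺‖; and (ii) for every a⁺ ∈ A ∩ U and every b⁺ ∈ P_B(a⁺) ∩ U, setting r = ‖a⁺ − b⁺‖, there is no b ∈ B with ‖b − a⁺‖ ≤ (1+c)r, a⁺ ∈ P_A(b), and ⟨a⁺ − b⁺, b − b⁺⟩ > √c·r^{ω/2+1}·‖b − b⁺‖. Then there exists ℓ ∈ (0,1), depending only on γ, c and U (one may take ℓ = min{1/2, 1 − √(2c/γ), c/(2+c)}), such that ‖a⁺ − b⁺‖² + ℓ‖b − b⁺‖² ≤ ‖a⁺ − b‖² for every building block b → a⁺ → b⁺ with b, a⁺, b⁺ ∈ U. -/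

import Mathlib

open Set Metric Filter Topology RealInnerProductSpace
open scoped ENNReal

variable {E : Type*} [NormedAddCommGroup E] [InnerProductSpace ℝ E]

/-- The (possibly set-valued) metric projection onto a set `S`. -/
noncomputable def projSet (S : Set E) (x : E) : Set E :=
  {s | s ∈ S ∧ ‖x - s‖ = Metric.infDist x S}

/-!
Write `r = ‖a⁺ - b⁺‖`, `d = ‖a⁺ - b‖`, `q = ‖b - b⁺‖`, so that
`d² = r² - 2⟪a⁺ - b⁺, b - b⁺⟫ + q²` and the claim amounts to `2⟪a⁺ - b⁺, b - b⁺⟫ ≤ (1 - ℓ) q²`.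
If `d > (1 + c) r`, the triangle inequality `q ≤ d + r` alone gives `r² + c/(2+c) q² ≤ d²`.
Otherwise the regularity hypothesis bounds the inner product by `√c r^(ω/2+1) q`, while the
separation hypothesis, expanded around `a⁺`, gives `q² ≥ 2γ r^(ω+2)`; together they bound
`2⟪a⁺ - b⁺, b - b⁺⟫` by `√(2c/γ) q²`.
-/

theorem norm_sub_le_of_mem_projSet {F : Type*} [NormedAddCommGroup F] {S : Set F} {x s y : F}
    (hs : s ∈ projSet S x) (hy : y ∈ S) :
    ‖x - s‖ ≤ ‖x - y‖ := by
  rw [hs.2, ← dist_eq_norm]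
  exact infDist_le_dist_of_mem hy

theorem dist_sq_add_div_mul_dist_sq_le {X : Type*} [PseudoMetricSpace X] {a b b' : X} {c : ℝ}
    (hc : 0 ≤ c) (hfar : (1 + c) * dist a b' ≤ dist a b) :
    dist a b' ^ 2 + c / (2 + c) * dist b b' ^ 2 ≤ dist a b ^ 2 := by
  have htri : dist b b' ≤ dist a b + dist a b' := by
    linarith [dist_triangle b a b', dist_comm a b]
  have hr := dist_nonneg (x := a) (y := b')
  have hq := dist_nonneg (x := b) (y := b')
  have hmain : (2 + c) * dist a b' ^ 2 + c * dist b b' ^ 2 ≤ (2 + c) * dist a b ^ 2 := by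
    nlinarith [mul_le_mul htri htri hq (by positivity), mul_nonneg hr (sub_nonneg.2 hfar)]
  rw [← mul_le_mul_iff_of_pos_left (by positivity : (0 : ℝ) < 2 + c)]
  field_simp
  linarith

theorem two_mul_mul_rpow_mul_sq_le_norm_sub_sq {a b b' : E} {γ ω : ℝ} (hγ : 0 ≤ γ)
    (hnear : ‖a - b'‖ ≤ ‖a - b‖)
    (hsep : ⟪b - a, b' - a⟫ ≤ (1 - γ * ‖b' - a‖ ^ ω) * ‖b - a‖ * ‖b' - a‖) :
    2 * γ * ‖a - b'‖ ^ ω * ‖a - b'‖ ^ 2 ≤ ‖b - b'‖ ^ 2 := by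
  have hexpand : ‖b - b'‖ ^ 2 = ‖b - a‖ ^ 2 - 2 * ⟪b - a, b' - a⟫ + ‖b' - a‖ ^ 2 := by
    rw [← norm_sub_sq_real, sub_sub_sub_cancel_right]
  rw [norm_sub_rev b a, norm_sub_rev b' a] at hsep hexpand
  have hγr : 0 ≤ γ * ‖a - b'‖ ^ ω * ‖a - b'‖ := by positivity
  nlinarith [sq_nonneg (‖a - b‖ - ‖a - b'‖), mul_le_mul_of_nonneg_left hnear hγr]

theorem two_mul_inner_le_sqrt_mul_norm_sub_sq {a b b' : E} {γ ω c : ℝ} (hγ : 0 < γ)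
    (hnear : ‖a - b'‖ ≤ ‖a - b‖)
    (hsep : ⟪b - a, b' - a⟫ ≤ (1 - γ * ‖b' - a‖ ^ ω) * ‖b - a‖ * ‖b' - a‖)
    (hreg : ⟪a - b', b - b'⟫ ≤ √c * ‖a - b'‖ ^ (ω / 2 + 1) * ‖b - b'‖) :
    2 * ⟪a - b', b - b'⟫ ≤ √(2 * c / γ) * ‖b - b'‖ ^ 2 := by
  rcases (norm_nonneg (a - b')).eq_or_lt with hr | hr
  · rw [norm_eq_zero.1 hr.symm, inner_zero_left, mul_zero]
    positivity
  set s := ‖a - b'‖ ^ (ω / 2 + 1)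
  have hs_sq : s ^ 2 = ‖a - b'‖ ^ ω * ‖a - b'‖ ^ 2 := by
    rw [← Real.rpow_mul_natCast hr.le, show (ω / 2 + 1) * ((2 : ℕ) : ℝ) = ω + 2 by push_cast; ring,
      Real.rpow_add hr, Real.rpow_two]
  have hq_sq : (√(2 * γ) * s) ^ 2 ≤ ‖b - b'‖ ^ 2 := by
    rw [mul_pow, Real.sq_sqrt (by positivity), hs_sq, ← mul_assoc]
    exact two_mul_mul_rpow_mul_sq_le_norm_sub_sq hγ.le hnear hsep
  have hq : √(2 * γ) * s ≤ ‖b - b'‖ :=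
    (pow_le_pow_iff_left₀ (by positivity) (norm_nonneg _) two_ne_zero).1 hq_sq
  have hsqrt : √(2 * c / γ) * √(2 * γ) = 2 * √c := by
    rw [← Real.sqrt_mul' _ (by positivity), show 2 * c / γ * (2 * γ) = 2 ^ 2 * c by field_simp,
      Real.sqrt_mul (by positivity), Real.sqrt_sq zero_le_two]
  calc 2 * ⟪a - b', b - b'⟫ ≤ √(2 * c / γ) * (√(2 * γ) * s) * ‖b - b'‖ := by
        rw [← mul_assoc, hsqrt]; linarith
    _ ≤ √(2 * c / γ) * ‖b - b'‖ * ‖b - b'‖ := by gcongr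
    _ = √(2 * c / γ) * ‖b - b'‖ ^ 2 := by ring

theorem stmt12_general {n : ℕ} (A B : Set (EuclideanSpace ℝ (Fin n)))
    (ω γ c : ℝ) (hγ : 0 < γ) (hc : 0 < c) (hcγ : c < γ / 2)
    (U : Set (EuclideanSpace ℝ (Fin n)))
    (hsep : ∀ b a' b' : EuclideanSpace ℝ (Fin n), b ∈ B → a' ∈ projSet A b →
      b' ∈ projSet B a' → b ∈ U → a' ∈ U → b' ∈ U →
      ⟪b - a', b' - a'⟫ ≤ (1 - γ * ‖b' - a'‖ ^ ω) * ‖b - a'‖ * ‖b' - a'‖)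
    (hreg : ∀ a' ∈ A ∩ U, ∀ b' ∈ projSet B a' ∩ U, ∀ b ∈ B,
      ‖b - a'‖ ≤ (1 + c) * ‖a' - b'‖ → a' ∈ projSet A b →
      ⟪a' - b', b - b'⟫ ≤ Real.sqrt c * ‖a' - b'‖ ^ (ω / 2 + 1) * ‖b - b'‖) :
    ∃ ℓ : ℝ, ℓ = min (1 / 2) (min (1 - Real.sqrt (2 * c / γ)) (c / (2 + c))) ∧
      0 < ℓ ∧ ℓ < 1 ∧
      ∀ b a' b' : EuclideanSpace ℝ (Fin n), b ∈ B → a' ∈ projSet A b →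
        b' ∈ projSet B a' → b ∈ U → a' ∈ U → b' ∈ U →
        ‖a' - b'‖ ^ 2 + ℓ * ‖b - b'‖ ^ 2 ≤ ‖a' - b‖ ^ 2 := by
  set ℓ := min (1 / 2) (min (1 - √(2 * c / γ)) (c / (2 + c)))
  have hsqrt_lt : √(2 * c / γ) < 1 := by
    rw [Real.sqrt_lt' one_pos, one_pow, div_lt_one hγ]
    linarith
  refine ⟨ℓ, rfl, lt_min one_half_pos (lt_min (by linarith) (by positivity)),
    (min_le_left _ _).trans_lt one_half_lt_one, ?_⟩
  intro b a' b' hb ha' hb' hbU ha'U hb'U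
  have hnear := norm_sub_le_of_mem_projSet hb' hb
  by_cases hclose : ‖b - a'‖ ≤ (1 + c) * ‖a' - b'‖
  · have hinner := two_mul_inner_le_sqrt_mul_norm_sub_sq hγ hnear
      (hsep b a' b' hb ha' hb' hbU ha'U hb'U) (hreg a' ⟨ha'.1, ha'U⟩ b' ⟨hb', hb'U⟩ b hb hclose ha')
    have hℓ : ℓ ≤ 1 - √(2 * c / γ) := (min_le_right _ _).trans (min_le_left _ _)
    have hexpand := norm_sub_sq_real (a' - b') (b - b')
    rw [sub_sub_sub_cancel_right] at hexpand
    linarith [mul_le_mul_of_nonneg_right hℓ (sq_nonneg ‖b - b'‖)]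
  · have hfar : (1 + c) * dist a' b' ≤ dist a' b := by
      rw [dist_eq_norm, dist_eq_norm, ← norm_sub_rev b a']
      linarith
    have hℓ : ℓ ≤ c / (2 + c) := (min_le_right _ _).trans (min_le_right _ _)
    have hbound := dist_sq_add_div_mul_dist_sq_le hc.le hfar
    simp only [dist_eq_norm] at hbound
    linarith [mul_le_mul_of_nonneg_right hℓ (sq_nonneg ‖b - b'‖)]

theorem stmt12 {n : ℕ} (A B : Set (EuclideanSpace ℝ (Fin n)))
    (hAne : A.Nonempty) (hBne : B.Nonempty) (hAc : IsClosed A) (hBc : IsClosed B)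
    (xs : EuclideanSpace ℝ (Fin n)) (hxs : xs ∈ A ∩ B)
    (ω γ c : ℝ) (hω : 0 ≤ ω) (hω2 : ω < 2) (hγ : 0 < γ) (hc : 0 < c) (hcγ : c < γ / 2)
    (U : Set (EuclideanSpace ℝ (Fin n))) (hU : U ∈ nhds xs)
    (hsep : ∀ b a' b' : EuclideanSpace ℝ (Fin n), b ∈ B → a' ∈ projSet A b →
      b' ∈ projSet B a' → b ∈ U → a' ∈ U → b' ∈ U →
      ⟪b - a', b' - a'⟫ ≤ (1 - γ * ‖b' - a'‖ ^ ω) * ‖b - a'‖ * ‖b' - a'‖)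
    (hreg : ∀ a' ∈ A ∩ U, ∀ b' ∈ projSet B a' ∩ U, ∀ b ∈ B,
      ‖b - a'‖ ≤ (1 + c) * ‖a' - b'‖ → a' ∈ projSet A b →
      ⟪a' - b', b - b'⟫ ≤ Real.sqrt c * ‖a' - b'‖ ^ (ω / 2 + 1) * ‖b - b'‖) :
    ∃ ℓ : ℝ, ℓ = min (1 / 2) (min (1 - Real.sqrt (2 * c / γ)) (c / (2 + c))) ∧
      0 < ℓ ∧ ℓ < 1 ∧
      ∀ b a' b' : EuclideanSpace ℝ (Fin n), b ∈ B → a' ∈ projSet A b →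
        b' ∈ projSet B a' → b ∈ U → a' ∈ U → b' ∈ U →
        ‖a' - b'‖ ^ 2 + ℓ * ‖b - b'‖ ^ 2 ≤ ‖a' - b‖ ^ 2 :=
  stmt12_general A B ω γ c hγ hc hcγ U hsep hreg
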